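/- Define g: [0,1] → [0,1] by g(x) := min{2x, 2 − 2x}, and define recursively g_1 := g and g_{s+1} := g ∘ g_s on [0,1] for s ∈ ℕ. Then for every x ∈ [0,1] the series Σ_{s=1}^∞ g_s(x)/2^{2s} converges and x² = x − Σ_{s=1}^∞ g_s(x)/2^{2s}. -/

import Mathlib

/-!
Since `g(y) = 2y` or `g(y) = 2 - 2y`, one checks `y - y² = g(y)/4 + (g(y) - g(y)²)/4`.
Iterating along the orbit `y = g_n(x)`, the series telescopes: its partial sums are
`(x - x²) - (g_n(x) - g_n(x)²)/4ⁿ`, and the error tends to `0` because `g_n(x) ∈ [0,1]`.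
-/

open Set Filter Topology

/-- the hat function `g(x) = min{2x, 2 − 2x}` -/
noncomputable def hatFun : ℝ → ℝ := fun x => min (2 * x) (2 - 2 * x)

lemma hatFun_mapsTo : MapsTo hatFun (Icc 0 1) (Icc 0 1) := by
  rintro y ⟨h0, h1⟩
  unfold hatFun
  rcases le_total (2 * y) (2 - 2 * y) with h | h
  · rw [min_eq_left h]; constructor <;> linarith
  · rw [min_eq_right h]; constructor <;> linarith

lemma sub_sq_sub_hatFun_sub_sq (y : ℝ) :
    y - y ^ 2 - (hatFun y - hatFun y ^ 2) / 4 = hatFun y / 4 := by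
  unfold hatFun
  rcases le_total (2 * y) (2 - 2 * y) with h | h
  · rw [min_eq_left h]; ring
  · rw [min_eq_right h]; ring

lemma hasSum_sub_succ_of_antitone {a : ℕ → ℝ} {l : ℝ} (ha : Antitone a)
    (hl : Tendsto a atTop (𝓝 l)) : HasSum (fun n => a n - a (n + 1)) (a 0 - l) := by
  rw [hasSum_iff_tendsto_nat_of_nonneg fun n => sub_nonneg.2 (ha n.le_succ)]
  simp_rw [Finset.sum_range_sub']
  exact hl.const_sub _

lemma hasSum_hatFun_iterate_div_four_pow {x : ℝ} (hx : x ∈ Icc (0 : ℝ) 1) :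
    HasSum (fun s : ℕ => hatFun^[s + 1] x / 4 ^ (s + 1)) (x - x ^ 2) := by
  have hmem : ∀ n, hatFun^[n] x ∈ Icc (0 : ℝ) 1 := fun n => hatFun_mapsTo.iterate n hx
  set a : ℕ → ℝ := fun n => (hatFun^[n] x - (hatFun^[n] x) ^ 2) / 4 ^ n with ha
  have hstep : ∀ n, a n - a (n + 1) = hatFun^[n + 1] x / 4 ^ (n + 1) := fun n => by
    have key := sub_sq_sub_hatFun_sub_sq (hatFun^[n] x)
    simp only [ha, Function.iterate_succ_apply', pow_succ]
    field_simp at key ⊢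
    linarith
  have hanti : Antitone a := antitone_nat_of_succ_le fun n => by
    rw [← sub_nonneg, hstep]
    exact div_nonneg (hmem (n + 1)).1 (by positivity)
  have hlim : Tendsto a atTop (𝓝 0) := by
    refine squeeze_zero (fun n => ?_) (fun n => ?_)
      (tendsto_pow_atTop_nhds_zero_of_lt_one (r := (1 / 4 : ℝ)) (by norm_num) (by norm_num))
    · obtain ⟨h0, h1⟩ := hmem n
      exact div_nonneg (by nlinarith) (by positivity)
    · rw [one_div_pow]
      exact div_le_div_of_nonneg_right (by nlinarith [sq_nonneg (hatFun^[n] x - 1 / 2)])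
        (by positivity)
  have ha0 : a 0 - 0 = x - x ^ 2 := by simp [ha]
  rw [← ha0, ← funext hstep]
  exact hasSum_sub_succ_of_antitone hanti hlim

/-- Yarotsky's sawtooth representation of the square
function.  With `g_s := g ∘ ⋯ ∘ g` the `s`-fold composition of the hat
function `g`, for every `x ∈ [0,1]` the series `Σ_{s=1}^∞ g_s(x)/2^{2s}`
converges and `x² = x − Σ_{s=1}^∞ g_s(x)/2^{2s}`. -/
theorem square_sawtooth (x : ℝ) (hx : x ∈ Set.Icc (0 : ℝ) 1) :
    Summable (fun s : ℕ => hatFun^[s + 1] x / 2 ^ (2 * (s + 1))) ∧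
    x ^ 2 = x - ∑' s : ℕ, hatFun^[s + 1] x / 2 ^ (2 * (s + 1)) := by
  have hpow : ∀ s : ℕ, (2 : ℝ) ^ (2 * (s + 1)) = 4 ^ (s + 1) := fun s => by
    rw [pow_mul]; norm_num
  have hsum := hasSum_hatFun_iterate_div_four_pow hx
  simp only [hpow]
  exact ⟨hsum.summable, by rw [hsum.tsum_eq]; ring⟩
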